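/- arXiv:2002.02076 — 2 statements merged into one kernel-verified Lean document; each statement's English description precedes it below -/
import Mathlib

section
/- Let (W, S) be a finite Coxeter system, w ∈ W, s = (s₁,…,s_l) a word in S, and 1 ≤ j ≤ l. The following are equivalent: (a) there exists a reduced subexpression of s for w avoiding position j; (b) there exists a sequence of positions t avoiding j with δ((s_i)_{i∈t}) = w; (c) the Demazure product δ((s₁,…,ŝ_j,…,s_l)) of the word with position j deleted is ≥ w in Bruhat order. -/
/-!
The products of the subwords of any word `r` are exactly the elements below the Demazure product
`δ(r)` in Bruhat order, and each of them is the product of a reduced subword.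

Bruhat order is handled through chains `u < u t` of reflections `t`. Its agreement with the
subword description follows from the strong exchange condition, which comes from the permutation
representation of `W` on `W × ZMod 2` in which `s_i` acts by `(t, ε) ↦ (s_i t s_i, ε + [t = s_i])`
(Björner–Brenti, §1.4). Compatibility with `δ` is the lifting property: `u ≤ x` implies
`u s ≤ max(x, x s)`, and `max(x, x s)` is exactly the step of `δ`.
-/

/-- The Demazure product `δ(q)` of a word `q = (q₁, …, q_l)` in the simple reflections,
defined via the 0-Hecke relations (`H_{q₁} ⋯ H_{q_l} = H_{δ(q)}`): multiplying left to
right, a letter is used exactly when it increases the length. -/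
noncomputable def demazureProd {B W : Type*} [Group W] {M : CoxeterMatrix B}
    (cs : CoxeterSystem M W) (q : List B) : W :=
  q.foldl (fun w i => if cs.length w < cs.length (w * cs.simple i)
    then w * cs.simple i else w) 1

/-- Bruhat order on `W`, via the subword property: `u ≤ w` iff some reduced word for `w`
contains a subword that is a reduced word for `u`. -/
def bruhatLE {B W : Type*} [Group W] {M : CoxeterMatrix B}
    (cs : CoxeterSystem M W) (u w : W) : Prop :=
  ∃ lw : List B, cs.IsReduced lw ∧ cs.wordProd lw = w ∧
    ∃ lu : List B, lu.Sublist lw ∧ cs.IsReduced lu ∧ cs.wordProd lu = u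

open List

namespace CoxeterSystem

variable {B W : Type*} [Group W] {M : CoxeterMatrix B} (cs : CoxeterSystem M W)

local prefix:100 "s" => cs.simple
local prefix:100 "π" => cs.wordProd
local prefix:100 "ℓ" => cs.length
local prefix:100 "ris " => cs.rightInvSeq
local prefix:100 "lis " => cs.leftInvSeq

theorem reverse_alternatingWord_two_mul (i i' : B) (m : ℕ) :
    (alternatingWord i i' (2 * m)).reverse = alternatingWord i' i (2 * m) := by
  refine List.ext_getElem (by simp) fun k h₁ _ => ?_
  simp only [length_reverse, length_alternatingWord] at h₁
  rw [getElem_reverse, getElem_alternatingWord _ _ _ _ (by simp; omega),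
    getElem_alternatingWord _ _ _ _ (by omega)]
  simp only [length_alternatingWord]
  grind

theorem leftInvSeq_alternatingWord_two_mul (i i' : B) (m : ℕ) :
    lis (alternatingWord i i' (2 * m)) = (range (2 * m)).map fun k => s i * (s i' * s i) ^ k := by
  refine List.ext_getElem (by simp) fun k h₁ _ => ?_
  simp only [length_leftInvSeq, length_alternatingWord] at h₁
  rw [getElem_leftInvSeq_alternatingWord _ _ _ _ _ h₁, prod_alternatingWord_eq_mul_pow]
  simp [show (2 * k + 1) / 2 = k by omega]

theorem prod_map_alternatingWord_two_mul {G : Type*} [Monoid G] (f : B → G) (i i' : B) (m : ℕ) :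
    ((alternatingWord i i' (2 * m)).map f).prod = (f i * f i') ^ m := by
  induction m with
  | zero => simp [alternatingWord]
  | succ m ih =>
    rw [show 2 * (m + 1) = 2 * m + 1 + 1 by ring, alternatingWord_succ', alternatingWord_succ']
    simp [ih, pow_succ', mul_assoc]

theorem even_count_rightInvSeq_alternatingWord [DecidableEq W] (i i' : B) (t : W) :
    Even ((ris (alternatingWord i i' (2 * M i i'))).count t) := by
  rw [← reverse_alternatingWord_two_mul, rightInvSeq_reverse, count_reverse,
    leftInvSeq_alternatingWord_two_mul, two_mul, range_add, map_append, map_map, count_append]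
  simp [Function.comp_def, pow_add]

section ParityRepresentation

variable [DecidableEq W]

def parityPerm (i : B) : Equiv.Perm (W × ZMod 2) :=
  Function.Involutive.toPerm (fun p => (s i * p.1 * s i, p.2 + if p.1 = s i then 1 else 0)) <| by
    rintro ⟨t, e⟩
    have hconj : s i * t * s i = s i ↔ t = s i := by
      constructor <;> intro h
      · simpa [mul_assoc] using congrArg (fun x => s i * x * s i) h
      · simp [h]
    ext
    · simp [mul_assoc]
    · by_cases h : t = s i
      · simp [h, add_assoc]
        decide
      · simp [h, hconj]

theorem parityPerm_apply (i : B) (t : W) (e : ZMod 2) :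
    cs.parityPerm i (t, e) = (s i * t * s i, e + if t = s i then 1 else 0) := rfl

theorem prod_map_parityPerm_apply (ω : List B) (t : W) (e : ZMod 2) :
    (ω.map cs.parityPerm).prod (t, e) = (π ω * t * (π ω)⁻¹, e + (ris ω).count t) := by
  induction ω with
  | nil => simp
  | cons i ω ih =>
    have hhead : π ω * t * (π ω)⁻¹ = s i ↔ (π ω)⁻¹ * s i * π ω = t := by
      constructor <;> intro h
      · rw [← h]; group
      · rw [← h]; group
    simp only [map_cons, prod_cons, Equiv.Perm.mul_apply, ih, parityPerm_apply, rightInvSeq,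
      count_cons, hhead, wordProd_cons, mul_inv_rev, inv_simple, beq_iff_eq]
    refine Prod.ext ?_ ?_
    · simp only; group
    · simp only; split_ifs <;> push_cast <;> ring

theorem isLiftable_parityPerm : M.IsLiftable cs.parityPerm := by
  intro i i'
  rw [← prod_map_alternatingWord_two_mul]
  ext ⟨t, e⟩ : 1
  rw [prod_map_parityPerm_apply, prod_alternatingWord_eq_mul_pow,
    (ZMod.natCast_eq_zero_iff_even).2 (cs.even_count_rightInvSeq_alternatingWord i i' t)]
  simp

def parityRep : W →* Equiv.Perm (W × ZMod 2) := cs.lift ⟨cs.parityPerm, cs.isLiftable_parityPerm⟩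

theorem parityRep_wordProd (ω : List B) : cs.parityRep (π ω) = (ω.map cs.parityPerm).prod := by
  induction ω with
  | nil => simp
  | cons i ω ih =>
    rw [wordProd_cons, map_mul, ih, parityRep, lift_apply_simple, map_cons, prod_cons]

theorem parityRep_apply (w x : W) (e : ZMod 2) :
    cs.parityRep w (x, e) = (w * x * w⁻¹, e + (cs.parityRep w (x, 0)).2) := by
  obtain ⟨ω, rfl⟩ := cs.wordProd_surjective w
  simp [parityRep_wordProd, prod_map_parityPerm_apply]

theorem parityRep_simple_apply_simple (i : B) (e : ZMod 2) :
    cs.parityRep (s i) (s i, e) = (s i, e + 1) := by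
  simp [parityRep, parityPerm_apply]

/-- Write `t = v s_i v⁻¹`: the action of `t` is that of `s_i` conjugated by `v`, and every
`parityRep w` commutes with shifting the `ZMod 2` coordinate (`parityRep_apply`). -/
theorem parityRep_self_of_isReflection {t : W} (ht : cs.IsReflection t) :
    cs.parityRep t (t, 0) = (t, 1) := by
  obtain ⟨v, i, rfl⟩ := ht
  set η := (cs.parityRep v⁻¹ (v * s i * v⁻¹, 0)).2
  have hback : cs.parityRep v⁻¹ (v * s i * v⁻¹, 0) = (s i, η) := by
    rw [parityRep_apply]; simp [η]; group
  have hη : cs.parityRep v (s i, η) = (v * s i * v⁻¹, 0) := by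
    rw [← hback, ← Equiv.Perm.mul_apply, ← map_mul, mul_inv_cancel, map_one, Equiv.Perm.one_apply]
  rw [parityRep_apply] at hη
  rw [map_mul, map_mul, Equiv.Perm.mul_apply, Equiv.Perm.mul_apply, hback,
    parityRep_simple_apply_simple, parityRep_apply]
  simp only [Prod.mk.injEq, true_and] at hη ⊢
  rw [add_right_comm, hη, zero_add]

end ParityRepresentation

/-- The parity of the number of occurrences of `t` in `ris ω` only depends on `π ω`. For the
word `ω₁ ++ τ`, with `ω₁` reduced for `π ω * t` and `τ` any word for `t`, it is odd. -/
theorem mem_rightInvSeq_of_length_mul_lt (ω : List B) {t : W} (ht : cs.IsReflection t)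
    (h : ℓ (π ω * t) < ℓ (π ω)) : t ∈ ris ω := by
  classical
  obtain ⟨ω₁, hω₁, hprod⟩ := cs.exists_isReduced (π ω * t)
  have hω : π ω = π ω₁ * t := by rw [← hprod, mul_assoc, ht.mul_self, mul_one]
  have hnot : t ∉ ris ω₁ := fun hmem => by
    have := (cs.isRightInversion_of_mem_rightInvSeq hω₁ hmem).2
    rw [← hω, ← hprod] at this
    omega
  have hcount := congrArg (fun w => (cs.parityRep w (t, 0)).2) hω
  simp only [map_mul, Equiv.Perm.mul_apply, parityRep_self_of_isReflection _ ht,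
    parityRep_wordProd, prod_map_parityPerm_apply, count_eq_zero.2 hnot] at hcount
  by_contra hmem
  simp [count_eq_zero.2 hmem] at hcount

theorem exists_wordProd_eraseIdx_eq_mul (ω : List B) {t : W} (ht : cs.IsReflection t)
    (h : ℓ (π ω * t) < ℓ (π ω)) : ∃ k < ω.length, π (ω.eraseIdx k) = π ω * t := by
  obtain ⟨k, hk, hkt⟩ := getElem_of_mem (cs.mem_rightInvSeq_of_length_mul_lt ω ht h)
  refine ⟨k, by simpa using hk, ?_⟩
  rw [← wordProd_mul_getD_rightInvSeq, getD_eq_getElem _ _ hk, hkt]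

theorem isReduced_append_singleton_iff (ω : List B) (i : B) :
    cs.IsReduced (ω ++ [i]) ↔ cs.IsReduced ω ∧ ℓ (π ω) < ℓ (π ω * s i) := by
  have h₁ := cs.length_wordProd_le ω
  have h₂ := cs.length_mul_simple (π ω) i
  simp only [IsReduced, wordProd_append, wordProd_singleton, length_append, length_singleton]
  omega

theorem length_mul_simple_lt_of_not_lt {w : W} {i : B} (h : ¬ℓ w < ℓ (w * s i)) :
    ℓ (w * s i) < ℓ w :=
  lt_of_le_of_ne (not_lt.1 h) (cs.length_mul_simple_ne w i)

theorem exists_isReduced_sublist (ω : List B) : ∃ q, q <+ ω ∧ cs.IsReduced q ∧ π q = π ω := by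
  induction ω using List.reverseRecOn with
  | nil => exact ⟨[], .slnil, by simp [IsReduced], rfl⟩
  | append_singleton ω i ih =>
    obtain ⟨p, hpω, hp, hpprod⟩ := ih
    rw [wordProd_append, wordProd_singleton, ← hpprod]
    by_cases hlt : ℓ (π p) < ℓ (π p * s i)
    · exact ⟨p ++ [i], hpω.append (.refl _), (cs.isReduced_append_singleton_iff p i).2 ⟨hp, hlt⟩,
        by rw [wordProd_append, wordProd_singleton]⟩
    · obtain ⟨k, hk, hprod⟩ := cs.exists_wordProd_eraseIdx_eq_mul p (cs.isReflection_simple i)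
        (cs.length_mul_simple_lt_of_not_lt hlt)
      refine ⟨p.eraseIdx k, ((p.eraseIdx_sublist k).trans hpω).trans (sublist_append_left _ _),
        ?_, hprod⟩
      have := cs.length_mul_simple (π p) i
      have hp' : ℓ (π p) = p.length := hp
      simp only [IsReduced, hprod, length_eraseIdx_of_lt hk]
      omega

noncomputable def demazureStep (w : W) (i : B) : W :=
  if ℓ w < ℓ (w * s i) then w * s i else w

theorem demazureProd_append_singleton (q : List B) (i : B) :
    demazureProd cs (q ++ [i]) = cs.demazureStep (demazureProd cs q) i := by
  rw [demazureProd, foldl_append]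
  rfl

theorem demazureProd_of_isReduced {q : List B} (h : cs.IsReduced q) : demazureProd cs q = π q := by
  induction q using List.reverseRecOn with
  | nil => rfl
  | append_singleton q i ih =>
    obtain ⟨hq, hlt⟩ := (cs.isReduced_append_singleton_iff q i).1 h
    rw [demazureProd_append_singleton, ih hq, demazureStep, if_pos hlt, wordProd_append,
      wordProd_singleton]

theorem exists_isReduced_sublist_wordProd_eq_demazureProd (r : List B) :
    ∃ p, p <+ r ∧ cs.IsReduced p ∧ π p = demazureProd cs r := by
  induction r using List.reverseRecOn with
  | nil => exact ⟨[], .slnil, by simp [IsReduced], rfl⟩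
  | append_singleton r i ih =>
    obtain ⟨p, hpr, hp, hpprod⟩ := ih
    rw [demazureProd_append_singleton, demazureStep, ← hpprod]
    split_ifs with hlt
    · exact ⟨p ++ [i], hpr.append (.refl _), (cs.isReduced_append_singleton_iff p i).2 ⟨hp, hlt⟩,
        by rw [wordProd_append, wordProd_singleton]⟩
    · exact ⟨p, hpr.trans (sublist_append_left _ _), hp, rfl⟩

def BruhatStep (u w : W) : Prop :=
  ∃ t, cs.IsReflection t ∧ w = u * t ∧ ℓ u < ℓ w

def BruhatChainLE : W → W → Prop :=
  Relation.ReflTransGen cs.BruhatStep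

theorem bruhatChainLE_demazureStep (w : W) (i : B) : cs.BruhatChainLE w (cs.demazureStep w i) := by
  unfold demazureStep
  split_ifs with h
  · exact .single ⟨s i, cs.isReflection_simple i, rfl, h⟩
  · exact .refl

theorem exists_sublist_wordProd_eq_of_bruhatChainLE {u : W} {ω : List B}
    (h : cs.BruhatChainLE u (π ω)) : ∃ q, q <+ ω ∧ π q = u := by
  generalize hw : π ω = w at h
  induction h generalizing ω with
  | refl => exact ⟨ω, .refl _, hw⟩
  | @tail v _ _ hstep ih =>
    obtain ⟨t, ht, rfl, hlt⟩ := hstep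
    have hωt : π ω * t = v := by rw [hw, mul_assoc, ht.mul_self, mul_one]
    obtain ⟨k, -, hk⟩ := cs.exists_wordProd_eraseIdx_eq_mul ω ht (by rwa [hωt, hw])
    obtain ⟨q, hq, rfl⟩ := ih (hk.trans hωt)
    exact ⟨q, hq.trans (eraseIdx_sublist _ _), rfl⟩

/-- Strong exchange of `t` in `ω ++ [i]`, where `ω` is reduced for `u t s_i`: by `huts` the deleted
letter must be the final `i`. -/
theorem mul_simple_eq_mul_of_length_lt {u t : W} {i : B} (ht : cs.IsReflection t)
    (hut : ℓ u < ℓ (u * t)) (huts : ℓ (u * t * s i) < ℓ (u * s i)) : u * s i = u * t := by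
  obtain ⟨ω, hω, hprod⟩ := cs.exists_isReduced (u * t * s i)
  have hv : π (ω ++ [i]) = u * t := by
    rw [wordProd_append, wordProd_singleton, ← hprod, simple_mul_simple_cancel_right]
  have hvt : u * t * t = u := by rw [mul_assoc, ht.mul_self, mul_one]
  obtain ⟨k, hk, hk'⟩ := cs.exists_wordProd_eraseIdx_eq_mul _ ht (by rwa [hv, hvt])
  rw [hv, hvt] at hk'
  rw [length_append, length_singleton] at hk
  rcases (Nat.lt_succ_iff.1 hk).lt_or_eq with hk | rfl
  · rw [eraseIdx_append_of_lt_length hk, wordProd_append, wordProd_singleton] at hk'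
    have hus : u * s i = π (ω.eraseIdx k) := by rw [← hk', simple_mul_simple_cancel_right]
    have hlen := cs.length_wordProd_le (ω.eraseIdx k)
    have hω' : ℓ (u * t * s i) = ω.length := hprod ▸ hω
    rw [length_eraseIdx_of_lt hk, ← hus] at hlen
    omega
  · rw [eraseIdx_append_of_length_le le_rfl] at hk'
    simp only [Nat.sub_self, eraseIdx_cons_zero, append_nil] at hk'
    calc u * s i = π ω * s i := by rw [hk']
      _ = u * t := by rw [← hprod, simple_mul_simple_cancel_right]

theorem bruhatChainLE_mul_simple_demazureStep {u x : W} (h : cs.BruhatChainLE u x) (i : B) :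
    cs.BruhatChainLE (u * s i) (cs.demazureStep x i) := by
  induction h using Relation.ReflTransGen.head_induction_on with
  | refl =>
    unfold demazureStep
    split_ifs with h
    · exact .refl
    · exact .single ⟨s i, cs.isReflection_simple i, (simple_mul_simple_cancel_right _ _).symm,
        cs.length_mul_simple_lt_of_not_lt h⟩
  | @head u v hstep hchain ih =>
    obtain ⟨t, ht, rfl, hlt⟩ := hstep
    have hne : ℓ (u * t * s i) ≠ ℓ (u * s i) := by
      have := (ht.conj (s i)).length_mul_left_ne (u * s i)
      rwa [inv_simple, show u * s i * (s i * t * s i) = u * t * s i by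
        simp only [← mul_assoc, simple_mul_simple_cancel_right]] at this
    rcases hne.lt_or_gt with h | h
    · rw [cs.mul_simple_eq_mul_of_length_lt ht hlt h]
      exact hchain.trans (cs.bruhatChainLE_demazureStep x i)
    · refine .head ⟨s i * t * (s i)⁻¹, ht.conj _, ?_, h⟩ ih
      rw [inv_simple]
      simp only [← mul_assoc, simple_mul_simple_cancel_right]

theorem bruhatChainLE_wordProd_demazureProd {q r : List B} (h : q <+ r) :
    cs.BruhatChainLE (π q) (demazureProd cs r) := by
  induction r using List.reverseRecOn generalizing q with
  | nil =>
    rw [sublist_nil.1 h]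
    exact .refl
  | append_singleton r i ih =>
    rw [demazureProd_append_singleton]
    obtain ⟨q₁, q₂, rfl, h₁, h₂⟩ := sublist_append_iff.1 h
    rcases sublist_singleton.1 h₂ with rfl | rfl
    · rw [append_nil]
      exact (ih h₁).trans (cs.bruhatChainLE_demazureStep _ i)
    · rw [wordProd_append, wordProd_singleton]
      exact cs.bruhatChainLE_mul_simple_demazureStep (ih h₁) i

theorem bruhatLE_iff_bruhatChainLE {u w : W} : bruhatLE cs u w ↔ cs.BruhatChainLE u w := by
  constructor
  · rintro ⟨lw, hlw, rfl, lu, hsub, -, rfl⟩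
    simpa [cs.demazureProd_of_isReduced hlw] using cs.bruhatChainLE_wordProd_demazureProd hsub
  · intro h
    obtain ⟨ω, hω, rfl⟩ := cs.exists_isReduced w
    obtain ⟨q, hq, rfl⟩ := cs.exists_sublist_wordProd_eq_of_bruhatChainLE h
    obtain ⟨p, hp, hpred, hpq⟩ := cs.exists_isReduced_sublist q
    exact ⟨ω, hω, rfl, p, hp.trans hq, hpred, hpq⟩

theorem exists_sublist_wordProd_eq_iff (r : List B) (w : W) :
    (∃ q, q <+ r ∧ π q = w) ↔ cs.BruhatChainLE w (demazureProd cs r) := by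
  constructor
  · rintro ⟨q, hq, rfl⟩
    exact cs.bruhatChainLE_wordProd_demazureProd hq
  · intro h
    obtain ⟨p, hp, -, hpr⟩ := cs.exists_isReduced_sublist_wordProd_eq_demazureProd r
    obtain ⟨q, hq, rfl⟩ := cs.exists_sublist_wordProd_eq_of_bruhatChainLE (hpr ▸ h)
    exact ⟨q, hq.trans hp, rfl⟩

theorem exists_isReduced_sublist_iff (r : List B) (w : W) :
    (∃ q, q <+ r ∧ cs.IsReduced q ∧ π q = w) ↔ ∃ q, q <+ r ∧ π q = w := by
  constructor
  · rintro ⟨q, hq, -, rfl⟩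
    exact ⟨q, hq, rfl⟩
  · rintro ⟨q, hq, rfl⟩
    obtain ⟨p, hp, hpred, hpq⟩ := cs.exists_isReduced_sublist q
    exact ⟨p, hp.trans hq, hpred, hpq⟩

theorem exists_sublist_demazureProd_eq_iff (r : List B) (w : W) :
    (∃ t, t <+ r ∧ demazureProd cs t = w) ↔ ∃ q, q <+ r ∧ cs.IsReduced q ∧ π q = w := by
  constructor
  · rintro ⟨t, ht, rfl⟩
    obtain ⟨p, hp, hpred, hpt⟩ := cs.exists_isReduced_sublist_wordProd_eq_demazureProd t
    exact ⟨p, hp.trans ht, hpred, hpt⟩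
  · rintro ⟨q, hq, hqred, rfl⟩
    exact ⟨q, hq, cs.demazureProd_of_isReduced hqred⟩

end CoxeterSystem

theorem stmt9_general {B W : Type*} [Group W] {M : CoxeterMatrix B}
    (cs : CoxeterSystem M W) (s : List B) (w : W) (j : Fin s.length) :
    ((∃ q : List B, q.Sublist (s.eraseIdx j) ∧ cs.IsReduced q ∧ cs.wordProd q = w) ↔
      (∃ t : List B, t.Sublist (s.eraseIdx j) ∧ demazureProd cs t = w)) ∧
    ((∃ t : List B, t.Sublist (s.eraseIdx j) ∧ demazureProd cs t = w) ↔
      bruhatLE cs w (demazureProd cs (s.eraseIdx j))) :=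
  ⟨(cs.exists_sublist_demazureProd_eq_iff _ w).symm,
    (cs.exists_sublist_demazureProd_eq_iff _ w).trans <|
      (cs.exists_isReduced_sublist_iff _ w).trans <|
        (cs.exists_sublist_wordProd_eq_iff _ w).trans cs.bruhatLE_iff_bruhatChainLE.symm⟩

/-- Let `(W, S)` be a finite Coxeter system, `w ∈ W`, `s = (s₁, …, s_l)`
a word in `S`, and `j` a position of `s`. The following are equivalent:
(a) there is a reduced subexpression of `s` for `w` avoiding position `j` (i.e. a
subword of `s` with position `j` deleted that is a reduced expression for `w`);
(b) there is a sequence of positions avoiding `j` whose corresponding subword has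
Demazure product `w`;
(c) the Demazure product `δ((s₁, …, ŝ_j, …, s_l))` of the word with position `j` deleted
is `≥ w` in Bruhat order. -/
theorem stmt9 {B W : Type*} [Group W] [Finite W] {M : CoxeterMatrix B}
    (cs : CoxeterSystem M W) (s : List B) (w : W) (j : Fin s.length) :
    ((∃ q : List B, q.Sublist (s.eraseIdx j) ∧ cs.IsReduced q ∧ cs.wordProd q = w) ↔
      (∃ t : List B, t.Sublist (s.eraseIdx j) ∧ demazureProd cs t = w)) ∧
    ((∃ t : List B, t.Sublist (s.eraseIdx j) ∧ demazureProd cs t = w) ↔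
      bruhatLE cs w (demazureProd cs (s.eraseIdx j))) :=
  stmt9_general cs s w j
end

section
/- Let Φ be a finite set of nonzero weights of a torus T lying in an open half-space, all with one-dimensional weight spaces. Suppose α ∈ Φ is integrally indecomposable in Φ, and suppose P ∈ ℤ[X(T)] is a finite sum P = Σ_t ε_t ∏_{i∈t}(1 − e^{−γ_i}) over a collection of subsets t of indices, with γ_i ∈ Φ distinct, ε_t ∈ {±1}, α = γ_j, and Σ_{t : j ∉ t} ε_t ≠ 0. Then in the formal expansion of P / ∏_{γ∈Φ}(1 − e^{−γ}), the coefficient of e^{−α} equals Σ_{t: j∉t} ε_t and in particular is nonzero. -/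
/-!
Expanding, `∏_{i ∈ t} (1 - e^{-γ_i}) = ∑_{s ⊆ t} (-1)^{|s|} e^{-∑_{i ∈ s} γ_i}`, and the
coefficient of `e^{-α}` in `e^{-μ} / ∏_{β ∈ Φ} (1 - e^{-β})` is the number of ways of
writing `α - μ` as an `ℕ`-combination of `Φ`. Positivity on the half-space leaves only the
trivial representation of `0`, and indecomposability leaves only the one-term representation
of `α`. Adding the `γ_i`, `i ∈ s`, to a representation of `α - ∑_{i ∈ s} γ_i` gives a
representation of `α` with at least `|s|` terms, so for `s ≠ ∅` this is possible only when
`s = {j}`. Hence `t` contributes `ε_t` if `j ∉ t` and `ε_t - ε_t = 0` if `j ∈ t`.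
-/

/-- The number of ways to write `γ` as a nonnegative integer linear combination of
elements of the finite set `Φ`; the coefficient of `e^{-γ}` in the formal expansion
of `∏_{β ∈ Φ} (1 - e^{-β})⁻¹`. -/
noncomputable def nreps {M : Type*} [AddCommGroup M] (Φ : Finset M) (γ : M) : ℕ :=
  Set.ncard {c : M → ℕ | (∀ β ∉ Φ, c β = 0) ∧ ∑ β ∈ Φ, c β • β = γ}

/-- The coefficient of `e^{-γ}` in the formal power series expansion of
`P / ∏_{β ∈ Φ} (1 - e^{-β})`. -/
noncomputable def expansionCoeff {M : Type*} [AddCommGroup M] (Φ : Finset M)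
    (P : AddMonoidAlgebra ℤ M) (γ : M) : ℤ :=
  ∑ μ ∈ P.coeff.support, P.coeff μ * (nreps Φ (γ + μ) : ℤ)

open Finset AddMonoidAlgebra

lemma prod_one_sub_single {R N ι : Type*} [CommRing R] [AddCommMonoid N] (s : Finset ι)
    (f : ι → N) :
    ∏ i ∈ s, (1 - single (f i) (1 : R)) =
      ∑ t ∈ s.powerset, single (∑ i ∈ t, f i) ((-1) ^ t.card) := by
  have hfactor : ∀ i, (1 : AddMonoidAlgebra R N) - single (f i) 1 = single (f i) (-1) + 1 :=
    fun i => by rw [sub_eq_neg_add, single_neg]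
  classical
  rw [prod_congr rfl fun i _ => hfactor i, prod_add]
  refine sum_congr rfl fun t _ => ?_
  rw [prod_const_one, mul_one, prod_single, prod_const]

section

variable {M : Type*} [AddCommGroup M]

def reps (Φ : Finset M) (γ : M) : Set (M → ℕ) :=
  {c | (∀ β ∉ Φ, c β = 0) ∧ ∑ β ∈ Φ, c β • β = γ}

lemma nreps_eq_ncard_reps (Φ : Finset M) (γ : M) : nreps Φ γ = (reps Φ γ).ncard := rfl

section Representations

variable {Φ : Finset M} {γ δ : M} {c d : M → ℕ}

lemma add_mem_reps (hc : c ∈ reps Φ γ) (hd : d ∈ reps Φ δ) : c + d ∈ reps Φ (γ + δ) :=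
  ⟨fun β hβ => by simp [hc.1 β hβ, hd.1 β hβ],
    by simp [add_smul, sum_add_distrib, hc.2, hd.2]⟩

lemma indicator_mem_reps [DecidableEq M] {u : Finset M} (hu : u ⊆ Φ) :
    (fun β => if β ∈ u then 1 else 0) ∈ reps Φ (∑ β ∈ u, β) :=
  ⟨fun β hβ => if_neg fun h => hβ (hu h),
    by simp [ite_smul, inter_eq_right.mpr hu]⟩

lemma pi_single_mem_reps [DecidableEq M] (hγ : γ ∈ Φ) : Pi.single γ 1 ∈ reps Φ γ :=
  ⟨fun β hβ => Pi.single_eq_of_ne (ne_of_mem_of_not_mem hγ hβ).symm 1,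
    by simp [Pi.single_apply, ite_smul, hγ]⟩

lemma eq_zero_of_mem_reps_of_sum_eq_zero (hc : c ∈ reps Φ γ) (h0 : ∑ β ∈ Φ, c β = 0) :
    c = 0 ∧ γ = 0 := by
  have hcΦ : ∀ β ∈ Φ, c β = 0 := sum_eq_zero_iff.mp h0
  refine ⟨funext fun β => ?_, ?_⟩
  · by_cases hβ : β ∈ Φ
    · exact hcΦ β hβ
    · exact hc.1 β hβ
  · rw [← hc.2]
    exact sum_eq_zero fun β hβ => by rw [hcΦ β hβ, zero_smul]

lemma eq_pi_single_of_mem_reps_of_sum_eq_one [DecidableEq M] (hc : c ∈ reps Φ γ)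
    (h1 : ∑ β ∈ Φ, c β = 1) : c = Pi.single γ 1 := by
  obtain ⟨β, hβΦ, hβ⟩ := exists_ne_zero_of_sum_ne_zero (h1.trans_ne one_ne_zero)
  have hsplit := add_sum_erase Φ c hβΦ
  have hcβ : c β = 1 := by
    have := single_le_sum (fun β' _ => Nat.zero_le (c β')) hβΦ
    omega
  have hrest : ∀ β' ∈ Φ.erase β, c β' = 0 := sum_eq_zero_iff.mp (by omega)
  have hc_eq : c = Pi.single β 1 := by
    funext β'
    by_cases hβ' : β' = β
    · rw [hβ', hcβ, Pi.single_eq_same]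
    rw [Pi.single_eq_of_ne hβ']
    by_cases hβ'Φ : β' ∈ Φ
    · exact hrest β' (mem_erase.mpr ⟨hβ', hβ'Φ⟩)
    · exact hc.1 β' hβ'Φ
  have hγ : γ = β := by
    rw [← hc.2, hc_eq]
    simp [Pi.single_apply, ite_smul, hβΦ]
  rwa [hγ]

end Representations

section Positive

variable {Φ : Finset M} (h : M →+ ℝ) (hpos : ∀ β ∈ Φ, 0 < h β)
include hpos

lemma reps_zero_of_pos : reps Φ 0 = {0} := by
  refine Set.eq_singleton_iff_unique_mem.mpr ⟨⟨fun _ _ => rfl, by simp⟩, fun c hc => ?_⟩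
  have hsum : ∑ β ∈ Φ, (c β : ℝ) * h β = 0 := by
    simpa [map_sum, map_nsmul] using congrArg h hc.2
  have hterm := (sum_eq_zero_iff_of_nonneg fun β hβ =>
    mul_nonneg (Nat.cast_nonneg _) (hpos β hβ).le).mp hsum
  refine (eq_zero_of_mem_reps_of_sum_eq_zero hc (sum_eq_zero fun β hβ => ?_)).1
  exact_mod_cast (mul_eq_zero.mp (hterm β hβ)).resolve_right (hpos β hβ).ne'

lemma nreps_zero_of_pos : nreps Φ 0 = 1 := by
  rw [nreps_eq_ncard_reps, reps_zero_of_pos h hpos, Set.ncard_singleton]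

end Positive

section Indecomposable

variable [DecidableEq M] {Φ : Finset M} {α : M}
  (hind : ∀ c ∈ reps Φ α, ∑ β ∈ Φ, c β ≤ 1)
include hind

lemma reps_eq_singleton_of_indecomposable (h : M →+ ℝ) (hpos : ∀ β ∈ Φ, 0 < h β)
    (hαΦ : α ∈ Φ) :
    reps Φ α = {Pi.single α 1} := by
  refine Set.eq_singleton_iff_unique_mem.mpr ⟨pi_single_mem_reps hαΦ, fun c hc => ?_⟩
  rcases Nat.le_one_iff_eq_zero_or_eq_one.mp (hind c hc) with h0 | h1
  · have hα : α = 0 := (eq_zero_of_mem_reps_of_sum_eq_zero hc h0).2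
    exact absurd (hpos α hαΦ) (by simp [hα])
  · exact eq_pi_single_of_mem_reps_of_sum_eq_one hc h1

lemma reps_sub_sum_eq_empty {u : Finset M} (hu : u ⊆ Φ) (hne : u.Nonempty) (hα : u ≠ {α}) :
    reps Φ (α - ∑ β ∈ u, β) = ∅ := by
  refine Set.eq_empty_iff_forall_notMem.mpr fun c hc => ?_
  have hsum := hind _ <| by
    simpa only [sub_add_cancel] using add_mem_reps hc (indicator_mem_reps hu)
  simp only [Pi.add_apply, sum_add_distrib, sum_boole, Nat.cast_id, filter_mem_eq_inter,
    inter_eq_right.mpr hu] at hsum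
  have hu1 : u.card = 1 := by have := hne.card_pos; omega
  obtain ⟨β, rfl⟩ := card_eq_one.mp hu1
  have hαβ := (eq_zero_of_mem_reps_of_sum_eq_zero hc (by simpa using hsum)).2
  rw [sum_singleton, sub_eq_zero] at hαβ
  exact hα (by rw [hαβ])

end Indecomposable

noncomputable def expansionCoeffHom (Φ : Finset M) (γ : M) : AddMonoidAlgebra ℤ M →+ ℤ :=
  (Finsupp.linearCombination ℤ fun μ => (nreps Φ (γ + μ) : ℤ)).toAddMonoidHom.comp
    coeffAddEquiv.toAddMonoidHom

lemma expansionCoeffHom_apply (Φ : Finset M) (γ : M) (P : AddMonoidAlgebra ℤ M) :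
    expansionCoeffHom Φ γ P = expansionCoeff Φ P γ := by
  simp [expansionCoeffHom, expansionCoeff, Finsupp.linearCombination_apply, Finsupp.sum]

lemma expansionCoeff_single (Φ : Finset M) (γ μ : M) (a : ℤ) :
    expansionCoeff Φ (single μ a) γ = a * nreps Φ (γ + μ) := by
  rw [← expansionCoeffHom_apply]
  simp [expansionCoeffHom, coeffAddEquiv, coeff_single]

lemma expansionCoeff_prod_one_sub_single [DecidableEq M] {Φ : Finset M} {α : M}
    (h : M →+ ℝ) (hpos : ∀ β ∈ Φ, 0 < h β) (hαΦ : α ∈ Φ)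
    (hind : ∀ c ∈ reps Φ α, ∑ β ∈ Φ, c β ≤ 1) {u : Finset M} (hu : u ⊆ Φ) :
    expansionCoeff Φ (∏ β ∈ u, (1 - single (-β) (1 : ℤ))) α = if α ∈ u then 0 else 1 := by
  have hterm : ∀ v ∈ u.powerset, expansionCoeff Φ (single (∑ β ∈ v, -β) ((-1) ^ v.card)) α
      = (if v = ∅ then 1 else 0) - (if v = {α} then 1 else 0) := by
    intro v hv
    rw [expansionCoeff_single, sum_neg_distrib, ← sub_eq_add_neg]
    rcases v.eq_empty_or_nonempty with rfl | hne
    · simp [nreps_eq_ncard_reps, reps_eq_singleton_of_indecomposable hind h hpos hαΦ]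
    by_cases hvα : v = {α}
    · simp [hvα, nreps_zero_of_pos h hpos]
    · simp [hne.ne_empty, hvα, nreps_eq_ncard_reps,
        reps_sub_sum_eq_empty hind ((mem_powerset.mp hv).trans hu) hne hvα]
  rw [prod_one_sub_single, ← expansionCoeffHom_apply, map_sum]
  simp only [expansionCoeffHom_apply]
  rw [sum_congr rfl hterm, sum_sub_distrib, sum_ite_eq', sum_ite_eq']
  by_cases hα : α ∈ u <;> simp [hα]

end

theorem stmt18_general {M : Type*} [AddCommGroup M] (Φ : Finset M)
    (h : M →+ ℝ) (hpos : ∀ β ∈ Φ, 0 < h β)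
    (α : M)
    (hind : ¬ ∃ c : M → ℕ, (∀ β ∉ Φ, c β = 0) ∧ 2 ≤ ∑ β ∈ Φ, c β ∧
      ∑ β ∈ Φ, c β • β = α)
    {ι : Type*} [DecidableEq ι]
    (γ : ι → M) (hγinj : Function.Injective γ) (hγΦ : ∀ i, γ i ∈ Φ)
    (j : ι) (hj : γ j = α)
    (T : Finset (Finset ι)) (ε : Finset ι → ℤ)
    (P : AddMonoidAlgebra ℤ M)
    (hP : P = ∑ t ∈ T, ε t •
      ∏ i ∈ t, (1 - (AddMonoidAlgebra.single (-(γ i)) (1 : ℤ) : AddMonoidAlgebra ℤ M)))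
    (hne : (∑ t ∈ T.filter (fun t => j ∉ t), ε t) ≠ 0) :
    expansionCoeff Φ P α = ∑ t ∈ T.filter (fun t => j ∉ t), ε t ∧
      expansionCoeff Φ P α ≠ 0 := by
  classical
  have hαΦ : α ∈ Φ := hj ▸ hγΦ j
  have hind_le_one : ∀ c ∈ reps Φ α, ∑ β ∈ Φ, c β ≤ 1 := fun c hc => by
    by_contra! h2
    exact hind ⟨c, hc.1, h2, hc.2⟩
  have hcoeff : expansionCoeff Φ P α = ∑ t ∈ T.filter (fun t => j ∉ t), ε t := by
    rw [hP, ← expansionCoeffHom_apply, map_sum, sum_filter]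
    refine sum_congr rfl fun t _ => ?_
    rw [map_zsmul, ← prod_image (f := fun β => 1 - single (-β) (1 : ℤ)) hγinj.injOn,
      expansionCoeffHom_apply,
      expansionCoeff_prod_one_sub_single h hpos hαΦ hind_le_one
        (image_subset_iff.mpr fun i _ => hγΦ i), ← hj]
    by_cases hjt : j ∈ t <;> simp [hjt, hγinj.mem_finset_image]
  exact ⟨hcoeff, hcoeff ▸ hne⟩

/-- Let `Φ` be a finite set of nonzero weights lying in an open
half-space (witnessed by `h`), and let `α = γ j ∈ Φ` be integrally indecomposable in
`Φ`. If `P = Σ_{t ∈ T} ε_t ∏_{i ∈ t} (1 - e^{-γ_i})` with the `γ_i ∈ Φ` distinct and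
`ε_t ∈ {±1}`, and `Σ_{t : j ∉ t} ε_t ≠ 0`, then the coefficient of `e^{-α}` in the
formal expansion of `P / ∏_{γ ∈ Φ}(1 - e^{-γ})` equals `Σ_{t : j ∉ t} ε_t`, and in
particular is nonzero. -/
theorem stmt18 {M : Type*} [AddCommGroup M] (Φ : Finset M)
    (h : M →+ ℝ) (hpos : ∀ β ∈ Φ, 0 < h β)
    (α : M) (hαΦ : α ∈ Φ)
    (hind : ¬ ∃ c : M → ℕ, (∀ β ∉ Φ, c β = 0) ∧ 2 ≤ ∑ β ∈ Φ, c β ∧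
      ∑ β ∈ Φ, c β • β = α)
    {ι : Type*} [Fintype ι] [DecidableEq ι]
    (γ : ι → M) (hγinj : Function.Injective γ) (hγΦ : ∀ i, γ i ∈ Φ)
    (j : ι) (hj : γ j = α)
    (T : Finset (Finset ι)) (ε : Finset ι → ℤ) (hε : ∀ t ∈ T, ε t = 1 ∨ ε t = -1)
    (P : AddMonoidAlgebra ℤ M)
    (hP : P = ∑ t ∈ T, ε t •
      ∏ i ∈ t, (1 - (AddMonoidAlgebra.single (-(γ i)) (1 : ℤ) : AddMonoidAlgebra ℤ M)))
    (hne : (∑ t ∈ T.filter (fun t => j ∉ t), ε t) ≠ 0) :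
    expansionCoeff Φ P α = ∑ t ∈ T.filter (fun t => j ∉ t), ε t ∧
      expansionCoeff Φ P α ≠ 0 :=
  stmt18_general Φ h hpos α hind γ hγinj hγΦ j hj T ε P hP hne
end
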